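/- Define f(x) = log(log(2/‖x‖)) for x ∈ ℝ² with 0 < ‖x‖ < 1, where ‖·‖ is the Euclidean norm. Then f is smooth on the punctured disc {0 < ‖x‖ < 1}, its gradient satisfies ‖∇f(x)‖ = 1/(‖x‖ log(2/‖x‖)), and f satisfies the equation Δf(x) = −‖∇f(x)‖² = −1/(‖x‖² log²(2/‖x‖)) at every point of the punctured disc. -/

import Mathlib

open MeasureTheory ENNReal

noncomputable section

/-- Smooth functions compactly supported in `D`. -/
def IsTestFn {m : ℕ} (D : Set (EuclideanSpace ℝ (Fin m))) (φ : EuclideanSpace ℝ (Fin m) → ℝ) :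
    Prop :=
  ContDiff ℝ (⊤ : ℕ∞) φ ∧ HasCompactSupport φ ∧ tsupport φ ⊆ D

/-- The `i`-th partial derivative of a (smooth) function. -/
def pd {m : ℕ} (φ : EuclideanSpace ℝ (Fin m) → ℝ) (i : Fin m)
    (x : EuclideanSpace ℝ (Fin m)) : ℝ :=
  fderiv ℝ φ x (EuclideanSpace.single i 1)

/-- `g` is the weak `i`-th partial derivative of `f` on `D`. -/
def HasWeakPDeriv {m : ℕ} (D : Set (EuclideanSpace ℝ (Fin m)))
    (f g : EuclideanSpace ℝ (Fin m) → ℝ) (i : Fin m) : Prop :=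
  ∀ φ, IsTestFn D φ → ∫ x in D, f x * pd φ i x = - ∫ x in D, g x * φ x

/-- The Morrey `M^p_p` norm of `f` on an open set `D ⊆ ℝ^m`. -/
def morreyNorm {m : ℕ} {E : Type*} [NormedAddCommGroup E] (p : ℝ)
    (D : Set (EuclideanSpace ℝ (Fin m))) (f : EuclideanSpace ℝ (Fin m) → E) : ℝ≥0∞ :=
  ⨆ (x : EuclideanSpace ℝ (Fin m)) (R : ℝ) (_ : 0 < R) (_ : Metric.ball x R ⊆ D),
    (ENNReal.ofReal (R ^ (p - (m : ℝ))) *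
      ∫⁻ y in Metric.ball x R, ENNReal.ofReal (‖f y‖ ^ p)) ^ (1 / p)

/-- `u` is Hölder continuous in `D`: it agrees a.e. on `D` with a function which is locally
`α`-Hölder continuous on `D`, for some `α ∈ (0,1)`. -/
def HolderContOn {m : ℕ} {E : Type*} [PseudoMetricSpace E]
    (D : Set (EuclideanSpace ℝ (Fin m))) (u : EuclideanSpace ℝ (Fin m) → E) : Prop :=
  ∃ α : NNReal, 0 < α ∧ α < 1 ∧ ∃ v : EuclideanSpace ℝ (Fin m) → E,
    (∀ᵐ x : EuclideanSpace ℝ (Fin m), x ∈ D → u x = v x) ∧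
    ∀ x ∈ D, ∃ r > 0, ∃ C : NNReal, HolderOnWith C α v (Metric.ball x r ∩ D)


/-- The Laplacian of `f : ℝ² → ℝ`, as the trace of the second derivative. -/
def lap (f : EuclideanSpace ℝ (Fin 2) → ℝ) (x : EuclideanSpace ℝ (Fin 2)) : ℝ :=
  ∑ i : Fin 2, iteratedFDeriv ℝ 2 f x (fun _ => EuclideanSpace.single i 1)


section Stmt13Aux

local notation "Esp" => EuclideanSpace ℝ (Fin 2)

private lemma hasDerivAt_L {s : ℝ} (hs : s ≠ 0) :
    HasDerivAt (fun t => Real.log 2 - Real.log t / 2) (-(s⁻¹ / 2)) s :=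
  ((Real.hasDerivAt_log hs).div_const 2).const_sub _

private lemma log_two_sub {r : ℝ} (hr : 0 < r) :
    Real.log 2 - Real.log (r ^ 2) / 2 = Real.log (2 / r) := by
  rw [Real.log_div (by norm_num) hr.ne', Real.log_pow]
  push_cast; ring

private lemma Lam_pos {r : ℝ} (h0 : 0 < r) (h1 : r < 1) : 0 < Real.log (2 / r) :=
  Real.log_pos (by rw [lt_div_iff₀ h0]; linarith)

private lemma keyA {x : Esp} (h0 : 0 < ‖x‖) (h1 : ‖x‖ < 1) :
    HasFDerivAt (fun z : Esp => Real.log (Real.log (2 / ‖z‖)))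
      ((-(‖x‖ ^ 2 * (Real.log 2 - Real.log (‖x‖ ^ 2) / 2))⁻¹) • innerSL ℝ x) x := by
  have hs : (0 : ℝ) < ‖x‖ ^ 2 := by positivity
  have hL : Real.log 2 - Real.log (‖x‖ ^ 2) / 2 = Real.log (2 / ‖x‖) := log_two_sub h0
  have hΛ : 0 < Real.log (2 / ‖x‖) := Lam_pos h0 h1
  have hLne : Real.log 2 - Real.log (‖x‖ ^ 2) / 2 ≠ 0 := by rw [hL]; exact hΛ.ne'
  have hd2 : HasDerivAt (fun t => Real.log (Real.log 2 - Real.log t / 2))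
      ((-((‖x‖ ^ 2)⁻¹ / 2)) / (Real.log 2 - Real.log (‖x‖ ^ 2) / 2)) (‖x‖ ^ 2) :=
    (hasDerivAt_L hs.ne').log hLne
  have hq : HasFDerivAt (fun z : Esp => ‖z‖ ^ 2) (2 • innerSL ℝ x) x :=
    (hasStrictFDerivAt_norm_sq x).hasFDerivAt
  have h := hd2.comp_hasFDerivAt x hq
  have heq : (fun z : Esp => Real.log (Real.log (2 / ‖z‖)))
      =ᶠ[nhds x] (fun z : Esp => Real.log (Real.log 2 - Real.log (‖z‖ ^ 2) / 2)) := by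
    filter_upwards [(isOpen_lt continuous_const continuous_norm).mem_nhds
      (show (0 : ℝ) < ‖x‖ from h0)] with z hz
    rw [log_two_sub hz]
  refine HasFDerivAt.congr_of_eventuallyEq ?_ heq
  have hco : (-(‖x‖ ^ 2 * (Real.log 2 - Real.log (‖x‖ ^ 2) / 2))⁻¹) • (innerSL ℝ x : Esp →L[ℝ] ℝ)
      = (-((‖x‖ ^ 2)⁻¹ / 2) / (Real.log 2 - Real.log (‖x‖ ^ 2) / 2)) • (2 • innerSL ℝ x) := by
    rw [show ((2 • innerSL ℝ x) : Esp →L[ℝ] ℝ) = (2 : ℝ) • innerSL ℝ x by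
      ext v; simp, smul_smul]
    congr 1
    generalize Real.log 2 - Real.log (‖x‖ ^ 2) / 2 = a at hLne ⊢
    field_simp
  rw [hco]
  exact h

private lemma keyH {s : ℝ} (hs : 0 < s) (hLne : Real.log 2 - Real.log s / 2 ≠ 0) :
    HasDerivAt (fun t => -(t * (Real.log 2 - Real.log t / 2))⁻¹)
      (((Real.log 2 - Real.log s / 2) - 1 / 2) / (s * (Real.log 2 - Real.log s / 2)) ^ 2) s := by
  have h1 := (hasDerivAt_id s).mul (hasDerivAt_L hs.ne')
  have h2 := (h1.inv (mul_ne_zero hs.ne' hLne)).neg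
  simp only [id_eq] at h2
  refine h2.congr_deriv ?_
  simp only [Pi.mul_apply, id_eq]
  generalize Real.log 2 - Real.log s / 2 = a at hLne ⊢
  field_simp
  ring

end Stmt13Aux

/-- `f(x) = log log (2/‖x‖)` is smooth on the punctured unit disc,
`‖∇f(x)‖ = 1/(‖x‖ log(2/‖x‖))`, and `Δf = -‖∇f‖² = -1/(‖x‖² log²(2/‖x‖))` there. -/
theorem stmt13
    (f : EuclideanSpace ℝ (Fin 2) → ℝ) (hf : f = fun x => Real.log (Real.log (2 / ‖x‖)))
    (D : Set (EuclideanSpace ℝ (Fin 2))) (hD : D = {x | 0 < ‖x‖ ∧ ‖x‖ < 1}) :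
    ContDiffOn ℝ (⊤ : ℕ∞) f D ∧
    (∀ x ∈ D, ‖gradient f x‖ = 1 / (‖x‖ * Real.log (2 / ‖x‖))) ∧
    (∀ x ∈ D, lap f x = - ‖gradient f x‖ ^ 2) ∧
    (∀ x ∈ D, lap f x = - (1 / (‖x‖ ^ 2 * Real.log (2 / ‖x‖) ^ 2))) := by
  subst hf hD
  have hDopen : IsOpen {x : EuclideanSpace ℝ (Fin 2) | 0 < ‖x‖ ∧ ‖x‖ < 1} :=
    (isOpen_lt continuous_const continuous_norm).inter
      (isOpen_lt continuous_norm continuous_const)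
  have smooth : ContDiffOn ℝ (⊤ : ℕ∞) (fun x : EuclideanSpace ℝ (Fin 2) =>
      Real.log (Real.log (2 / ‖x‖))) {x | 0 < ‖x‖ ∧ ‖x‖ < 1} := by
    rintro x ⟨h0, h1⟩
    have hx0 : x ≠ 0 := by simpa using h0.ne'
    have h2r : (2 : ℝ) / ‖x‖ ≠ 0 := by positivity
    have hΛ := Lam_pos h0 h1
    have c1 : ContDiffAt ℝ (⊤ : ℕ∞) (fun z : EuclideanSpace ℝ (Fin 2) => 2 / ‖z‖) x :=
      contDiffAt_const.div (contDiffAt_norm ℝ hx0) h0.ne'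
    have c2 : ContDiffAt ℝ (⊤ : ℕ∞) (fun z : EuclideanSpace ℝ (Fin 2) => Real.log (2 / ‖z‖)) x :=
      (Real.contDiffAt_log.2 h2r).comp (g := Real.log) x c1
    exact ((Real.contDiffAt_log.2 hΛ.ne').comp x c2).contDiffWithinAt
  have hgrad : ∀ x : EuclideanSpace ℝ (Fin 2), 0 < ‖x‖ → ‖x‖ < 1 →
      gradient (fun z : EuclideanSpace ℝ (Fin 2) => Real.log (Real.log (2 / ‖z‖))) x
        = (-(‖x‖ ^ 2 * Real.log (2 / ‖x‖))⁻¹) • x := by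
    intro x h0 h1
    have hA := keyA h0 h1
    have hg : HasGradientAt (fun z : EuclideanSpace ℝ (Fin 2) => Real.log (Real.log (2 / ‖z‖)))
        ((-(‖x‖ ^ 2 * (Real.log 2 - Real.log (‖x‖ ^ 2) / 2))⁻¹) • x) x := by
      rw [hasGradientAt_iff_hasFDerivAt]
      refine hA.congr_fderiv ?_
      ext v
      simp [InnerProductSpace.toDual_apply_apply, real_inner_smul_left]
    rw [hg.gradient, log_two_sub h0]
  have hgnorm : ∀ x ∈ {x : EuclideanSpace ℝ (Fin 2) | 0 < ‖x‖ ∧ ‖x‖ < 1},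
      ‖gradient (fun z : EuclideanSpace ℝ (Fin 2) => Real.log (Real.log (2 / ‖z‖))) x‖
        = 1 / (‖x‖ * Real.log (2 / ‖x‖)) := by
    rintro x ⟨h0, h1⟩
    have hΛ := Lam_pos h0 h1
    rw [hgrad x h0 h1, norm_smul, Real.norm_eq_abs, abs_neg, abs_inv,
      abs_of_pos (mul_pos (pow_pos h0 2) hΛ)]
    field_simp
  have hlap : ∀ x ∈ {x : EuclideanSpace ℝ (Fin 2) | 0 < ‖x‖ ∧ ‖x‖ < 1},
      lap (fun z : EuclideanSpace ℝ (Fin 2) => Real.log (Real.log (2 / ‖z‖))) x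
        = - (1 / (‖x‖ ^ 2 * Real.log (2 / ‖x‖) ^ 2)) := by
    rintro x ⟨h0, h1⟩
    have hs : (0 : ℝ) < ‖x‖ ^ 2 := by positivity
    have hΛ := Lam_pos h0 h1
    have hL : Real.log 2 - Real.log (‖x‖ ^ 2) / 2 = Real.log (2 / ‖x‖) := log_two_sub h0
    have hLne : Real.log 2 - Real.log (‖x‖ ^ 2) / 2 ≠ 0 := by rw [hL]; exact hΛ.ne'
    have hfd : fderiv ℝ (fun z : EuclideanSpace ℝ (Fin 2) => Real.log (Real.log (2 / ‖z‖)))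
        =ᶠ[nhds x] (fun y : EuclideanSpace ℝ (Fin 2) =>
          (-(‖y‖ ^ 2 * (Real.log 2 - Real.log (‖y‖ ^ 2) / 2))⁻¹) • innerSL ℝ y) := by
      filter_upwards [hDopen.mem_nhds ⟨h0, h1⟩] with y hy
      exact (keyA hy.1 hy.2).fderiv
    have hq : HasFDerivAt (fun z : EuclideanSpace ℝ (Fin 2) => ‖z‖ ^ 2) (2 • innerSL ℝ x) x :=
      (hasStrictFDerivAt_norm_sq x).hasFDerivAt
    have hc := (keyH hs hLne).comp_hasFDerivAt x hq
    have hφ := hc.smul (innerSL ℝ (E := EuclideanSpace ℝ (Fin 2))).hasFDerivAt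
    have h2 : fderiv ℝ (fderiv ℝ (fun z : EuclideanSpace ℝ (Fin 2) =>
        Real.log (Real.log (2 / ‖z‖)))) x = _ := hfd.fderiv_eq.trans hφ.fderiv
    have hnorm : x 0 * x 0 + x 1 * x 1 = ‖x‖ ^ 2 := by
      rw [← real_inner_self_eq_norm_sq]
      simp [PiLp.inner_apply, Fin.sum_univ_two]
      rw [EuclideanSpace.norm_eq, Real.sq_sqrt (by positivity), Fin.sum_univ_two]
      simp [sq]
    unfold lap
    rw [Fin.sum_univ_two, iteratedFDeriv_two_apply, iteratedFDeriv_two_apply, h2]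
    simp only [ContinuousLinearMap.add_apply, ContinuousLinearMap.smul_apply,
      ContinuousLinearMap.smulRight_apply, innerSL_apply_apply, smul_eq_mul, Function.comp,
      EuclideanSpace.inner_single_right, RCLike.inner_apply, starRingEnd_apply, star_trivial,
      mul_one, one_mul]
    simp only [EuclideanSpace.single_apply, if_pos, innerSL_apply_apply,
      EuclideanSpace.inner_single_right, conj_trivial, nsmul_eq_mul, Nat.cast_ofNat,
      mul_one, one_mul, if_true, reduceIte]
    rw [hL]
    have hsingle : ∀ i : Fin 2, (innerSL ℝ) x (EuclideanSpace.single i 1) = x i := by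
      intro i
      simp [EuclideanSpace.inner_single_right]
    rw [hsingle, hsingle, ← hnorm]
    have hne : x 0 * x 0 + x 1 * x 1 ≠ 0 := by rw [hnorm]; exact hs.ne'
    have hss : ∀ i : Fin 2, (innerSL ℝ) (EuclideanSpace.single i (1 : ℝ)) (EuclideanSpace.single i 1) = 1 := by
      intro i; simp
    simp only [hss]
    have hne' : x 0 ^ 2 + x 1 ^ 2 ≠ 0 := by simpa [sq] using hne
    field_simp
    ring
  refine ⟨smooth, hgnorm, fun x hx => ?_, hlap⟩
  rw [hlap x hx, hgnorm x hx]
  have h0 := hx.1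
  have hΛ := Lam_pos hx.1 hx.2
  field_simp

end
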